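/- Let (a_n) be a sequence of positive real numbers and K ≥ 1 an integer. Suppose that for all sufficiently large n, a_n/a_{n+1} = 1 + 1/n + (1/n)·∑_{i=1}^{K} 1/(∏_{k=1}^{i} ln_{(k)} n) + R_n, where the remainder satisfies n·(∏_{k=1}^{K+1} ln_{(k)} n)·R_n → 0 as n → ∞ (i.e. R_n = o(1/(n·∏_{k=1}^{K+1} ln_{(k)} n))). Then the series ∑_{n=1}^∞ a_n diverges (is not summable). -/

import Mathlib

/-!
Write `P(x) = x · ∏_{k=1}^{K+1} ln_{(k)} x`, so that `log P(x) = ∑_{k=1}^{K+2} ln_{(k)} x`.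
Since `ln_{(k+1)}` increases on `[x, y]` by at least `(y - x) / (y ∏_{j ≤ k} ln_{(j)} y)`,
exponentiating gives `P(n+1) / P(n) ≥ 1 + 1/(n+1) + ∑_{k=1}^{K+1} 1/((n+1) ∏_{j ≤ k} ln_{(j)} (n+1))`,
which dominates `a_{n+1} / a_{n+2}` as soon as the remainder drops below the last summand.
So `a_{n+1} P(n)` is eventually nondecreasing and `a_{n+1} ≥ c / P(n)`; and `∑ 1 / P(n)` diverges
because its terms dominate the increments of `ln_{(K+2)} n → ∞`.
-/

open Filter Finset Real

namespace Real

theorem tendsto_iterate_log_atTop (k : ℕ) : Tendsto log^[k] atTop atTop :=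
  tendsto_log_atTop.iterate k

theorem eventually_iterate_log_pos (m : ℕ) : ∀ᶠ x : ℝ in atTop, ∀ k ≤ m, 0 < log^[k] x := by
  have h := (eventually_all_finset (range (m + 1))).2
    fun k _ => (tendsto_iterate_log_atTop k).eventually_gt_atTop 0
  filter_upwards [h] with x hx k hk
  exact hx k (mem_range.2 (Nat.lt_succ_of_le hk))

theorem iterate_log_le_iterate_log {k : ℕ} {x y : ℝ} (hx : ∀ j < k, 0 < log^[j] x)
    (hxy : x ≤ y) : log^[k] x ≤ log^[k] y := by
  induction k with
  | zero => exact hxy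
  | succ k ih =>
    rw [Function.iterate_succ_apply', Function.iterate_succ_apply']
    exact log_le_log (hx k k.lt_succ_self) (ih fun j hj => hx j (hj.trans k.lt_succ_self))

theorem iterate_log_pos_of_le {k : ℕ} {x y : ℝ} (hx : ∀ j ≤ k, 0 < log^[j] x) (hxy : x ≤ y) :
    ∀ j ≤ k, 0 < log^[j] y := fun j hj =>
  (hx j hj).trans_le (iterate_log_le_iterate_log (fun i hi => hx i (by omega)) hxy)

theorem div_le_log_sub_log {a b : ℝ} (ha : 0 < a) (hb : 0 < b) :
    (b - a) / b ≤ log b - log a := by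
  have h := one_sub_inv_le_log_of_pos (div_pos hb ha)
  rw [log_div hb.ne' ha.ne', inv_div] at h
  calc (b - a) / b = 1 - a / b := by field_simp
    _ ≤ log b - log a := h

theorem log_sub_log_le_div {a b : ℝ} (ha : 0 < a) (hb : 0 < b) :
    log b - log a ≤ (b - a) / a := by
  have h := log_le_sub_one_of_pos (div_pos hb ha)
  rw [log_div hb.ne' ha.ne'] at h
  calc log b - log a ≤ b / a - 1 := h
    _ = (b - a) / a := by field_simp

end Real

noncomputable def iterLogProd (m : ℕ) (x : ℝ) : ℝ := ∏ k ∈ Icc 1 m, log^[k] x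

theorem iterLogProd_zero (x : ℝ) : iterLogProd 0 x = 1 := by
  simp [iterLogProd]

theorem iterLogProd_succ (m : ℕ) (x : ℝ) :
    iterLogProd (m + 1) x = iterLogProd m x * log^[m + 1] x :=
  prod_Icc_succ_top (by omega) _

theorem iterLogProd_pos {m : ℕ} {x : ℝ} (hx : ∀ k ≤ m, 0 < log^[k] x) : 0 < iterLogProd m x :=
  prod_pos fun k hk => hx k (mem_Icc.1 hk).2

theorem mul_iterLogProd_pos {m : ℕ} {x : ℝ} (hx : ∀ k ≤ m, 0 < log^[k] x) :
    0 < x * iterLogProd m x :=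
  mul_pos (hx 0 m.zero_le) (iterLogProd_pos hx)

theorem log_mul_iterLogProd {m : ℕ} {x : ℝ} (hx : ∀ k ≤ m, 0 < log^[k] x) :
    log (x * iterLogProd m x) = log x + ∑ k ∈ Icc 1 m, log^[k + 1] x := by
  have hx0 : 0 < x := hx 0 m.zero_le
  rw [log_mul hx0.ne' (iterLogProd_pos hx).ne', iterLogProd,
    log_prod fun k hk => (hx k (mem_Icc.1 hk).2).ne']
  simp only [Function.iterate_succ_apply']

theorem div_mul_iterLogProd_le_iterate_log_sub {k : ℕ} {x y : ℝ}
    (hx : ∀ j ≤ k, 0 < log^[j] x) (hxy : x ≤ y) :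
    (y - x) / (y * iterLogProd k y) ≤ log^[k + 1] y - log^[k + 1] x := by
  have hy := iterate_log_pos_of_le hx hxy
  induction k with
  | zero =>
    simpa [iterLogProd_zero] using div_le_log_sub_log (hx 0 le_rfl) (hy 0 le_rfl)
  | succ k ih =>
    have hL := hy (k + 1) le_rfl
    calc (y - x) / (y * iterLogProd (k + 1) y)
        = (y - x) / (y * iterLogProd k y) / log^[k + 1] y := by
          rw [iterLogProd_succ, div_div, mul_assoc]
      _ ≤ (log^[k + 1] y - log^[k + 1] x) / log^[k + 1] y := by
          gcongr
          exact ih (fun j hj => hx j (by omega)) fun j hj => hy j (by omega)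
      _ ≤ log^[k + 2] y - log^[k + 2] x := by
          simp only [Function.iterate_succ_apply' log (k + 1)]
          exact div_le_log_sub_log (hx (k + 1) le_rfl) hL


theorem iterate_log_sub_le_div_mul_iterLogProd {k : ℕ} {x y : ℝ}
    (hx : ∀ j ≤ k, 0 < log^[j] x) (hxy : x ≤ y) :
    log^[k + 1] y - log^[k + 1] x ≤ (y - x) / (x * iterLogProd k x) := by
  have hy := iterate_log_pos_of_le hx hxy
  induction k with
  | zero =>
    simpa [iterLogProd_zero] using log_sub_log_le_div (hx 0 le_rfl) (hy 0 le_rfl)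
  | succ k ih =>
    have hL := hx (k + 1) le_rfl
    calc log^[k + 2] y - log^[k + 2] x
        ≤ (log^[k + 1] y - log^[k + 1] x) / log^[k + 1] x := by
          simp only [Function.iterate_succ_apply' log (k + 1)]
          exact log_sub_log_le_div hL (hy (k + 1) le_rfl)
      _ ≤ (y - x) / (x * iterLogProd k x) / log^[k + 1] x := by
          gcongr
          exact ih (fun j hj => hx j (by omega)) fun j hj => hy j (by omega)
      _ = (y - x) / (x * iterLogProd (k + 1) x) := by
          rw [iterLogProd_succ, div_div, mul_assoc]

theorem one_add_sum_le_mul_iterLogProd_div {m : ℕ} {x y : ℝ}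
    (hx : ∀ k ≤ m, 0 < log^[k] x) (hxy : x ≤ y) :
    1 + (y - x) / y + ∑ k ∈ Icc 1 m, (y - x) / (y * iterLogProd k y)
      ≤ y * iterLogProd m y / (x * iterLogProd m x) := by
  have hy := iterate_log_pos_of_le hx hxy
  have hlog : (y - x) / y + ∑ k ∈ Icc 1 m, (y - x) / (y * iterLogProd k y)
      ≤ log (y * iterLogProd m y) - log (x * iterLogProd m x) := by
    have h0 : (y - x) / y ≤ log y - log x := div_le_log_sub_log (hx 0 m.zero_le) (hy 0 m.zero_le)
    have hsum : ∑ k ∈ Icc 1 m, (y - x) / (y * iterLogProd k y)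
        ≤ ∑ k ∈ Icc 1 m, (log^[k + 1] y - log^[k + 1] x) :=
      sum_le_sum fun k hk =>
        div_mul_iterLogProd_le_iterate_log_sub (fun j hj => hx j (hj.trans (mem_Icc.1 hk).2)) hxy
    rw [sum_sub_distrib] at hsum
    rw [log_mul_iterLogProd hx, log_mul_iterLogProd hy]
    linarith
  calc 1 + (y - x) / y + ∑ k ∈ Icc 1 m, (y - x) / (y * iterLogProd k y)
      ≤ log (y * iterLogProd m y) - log (x * iterLogProd m x) + 1 := by linarith
    _ ≤ exp (log (y * iterLogProd m y) - log (x * iterLogProd m x)) := add_one_le_exp _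
    _ = y * iterLogProd m y / (x * iterLogProd m x) := by rw [exp_sub, exp_log (mul_iterLogProd_pos hy), exp_log (mul_iterLogProd_pos hx)]

theorem not_summable_of_tendsto_atTop_of_sub_le {f g : ℕ → ℝ} (hf : Tendsto f atTop atTop)
    (hfg : ∀ᶠ n in atTop, f (n + 1) - f n ≤ g n) : ¬ Summable g := by
  intro hg
  obtain ⟨N, hN⟩ := eventually_atTop.1 hfg
  have hpartial : ∀ n ≥ N, f n - f N ≤ ∑ i ∈ range n, g i - ∑ i ∈ range N, g i := by
    intro n hn
    induction n, hn using Nat.le_induction with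
    | base => simp
    | succ n hn ih => rw [sum_range_succ]; linarith [hN n hn]
  have hbdd : ∀ᶠ n in atTop, ∑ i ∈ range n, g i < ∑' i, g i + 1 :=
    hg.hasSum.tendsto_sum_nat.eventually (gt_mem_nhds (lt_add_one _))
  obtain ⟨n, hfn, hsn, hn⟩ := ((hf.eventually_gt_atTop
    (f N + ∑' i, g i + 1 - ∑ i ∈ range N, g i)).and (hbdd.and (eventually_ge_atTop N))).exists
  linarith [hpartial n hn]

theorem not_summable_one_div_mul_iterLogProd (m : ℕ) :
    ¬ Summable fun n : ℕ => 1 / ((n : ℝ) * iterLogProd m n) := by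
  refine not_summable_of_tendsto_atTop_of_sub_le
    ((tendsto_iterate_log_atTop (m + 1)).comp tendsto_natCast_atTop_atTop) ?_
  filter_upwards [tendsto_natCast_atTop_atTop.eventually (eventually_iterate_log_pos m)] with n hn
  simpa using iterate_log_sub_le_div_mul_iterLogProd hn (lt_add_one (n : ℝ)).le

theorem not_summable_of_eventually_div_succ_le {a b : ℕ → ℝ} (ha : ∀ᶠ n in atTop, 0 < a n)
    (hb : ∀ᶠ n in atTop, 0 < b n) (hab : ∀ᶠ n in atTop, a n / a (n + 1) ≤ b n / b (n + 1))
    (hb_not : ¬ Summable b) : ¬ Summable a := by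
  intro hsum
  obtain ⟨N, hN⟩ := eventually_atTop.1 (ha.and (hb.and hab))
  have hanti : ∀ n ≥ N, b n / a n ≤ b N / a N := by
    intro n hn
    induction n, hn using Nat.le_induction with
    | base => rfl
    | succ n hn ih =>
      obtain ⟨ha0, -, h⟩ := hN n hn
      obtain ⟨ha1, hb1, -⟩ := hN (n + 1) (by omega)
      rw [div_le_div_iff₀ ha1 hb1] at h
      refine le_trans ?_ ih
      rw [div_le_div_iff₀ ha1 ha0]
      linarith
  refine hb_not ((hsum.mul_left (b N / a N)).of_norm_bounded_eventually_nat ?_)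
  filter_upwards [eventually_ge_atTop N] with n hn
  obtain ⟨ha0, hb0, -⟩ := hN n hn
  rw [norm_of_nonneg hb0.le, ← div_le_iff₀ ha0]
  exact hanti n hn

theorem extended_test_remainder_divergence_general
    (a : ℕ → ℝ) (ha : ∀ n, 0 < a n) (K : ℕ) (R : ℕ → ℝ)
    (hratio : ∀ᶠ n : ℕ in Filter.atTop,
      a n / a (n + 1) =
        1 + 1 / (n : ℝ)
          + (1 / (n : ℝ)) * ∑ i ∈ Finset.Icc 1 K,
              1 / ∏ k ∈ Finset.Icc 1 i, Real.log^[k] (n : ℝ)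
          + R n)
    (hR : Filter.Tendsto
      (fun n : ℕ => (n : ℝ) * (∏ k ∈ Finset.Icc 1 (K + 1), Real.log^[k] (n : ℝ)) * R n)
      Filter.atTop (nhds 0)) :
    ¬ Summable a := by
  have hpos : ∀ᶠ n : ℕ in atTop, ∀ k ≤ K + 1, 0 < log^[k] (n : ℝ) :=
    tendsto_natCast_atTop_atTop.eventually (eventually_iterate_log_pos (K + 1))
  have hR_le : ∀ᶠ n : ℕ in atTop, R n ≤ 1 / ((n : ℝ) * iterLogProd (K + 1) n) := by
    filter_upwards [hR.eventually_lt_const one_pos, hpos] with n hn hn_pos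
    rw [le_div_iff₀ (mul_iterLogProd_pos hn_pos), mul_comm]
    exact hn.le
  intro hsum
  refine not_summable_of_eventually_div_succ_le (a := fun n => a (n + 1))
    (.of_forall fun n => ha (n + 1)) ?_ ?_ (not_summable_one_div_mul_iterLogProd (K + 1))
    ((summable_nat_add_iff 1).2 hsum)
  · filter_upwards [hpos] with n hn
    exact one_div_pos.2 (mul_iterLogProd_pos hn)
  · filter_upwards [hpos, (tendsto_add_atTop_nat 1).eventually (hratio.and hR_le)]
      with n hn ⟨hrat, hRn⟩
    have key := one_add_sum_le_mul_iterLogProd_div hn (lt_add_one (n : ℝ)).le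
    rw [sum_Icc_succ_top (by omega)] at key
    simp only [iterLogProd, Nat.cast_add, Nat.cast_one, add_sub_cancel_left, mul_sum,
      one_div_mul_one_div] at hrat hRn key ⊢
    rw [div_div_div_cancel_left' _ _ one_ne_zero]
    linarith

/-- If `a_n / a_{n+1} = 1 + 1/n + (1/n)·∑_{i=1}^{K} 1/∏_{k=1}^{i} ln_{(k)} n + R_n`
with `R_n = o(1/(n · ∏_{k=1}^{K+1} ln_{(k)} n))`, then `∑ a_n` diverges.
Here `Real.log^[k]` is the `k`-th iterate of `Real.log`. -/
theorem extended_test_remainder_divergence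
    (a : ℕ → ℝ) (ha : ∀ n, 0 < a n) (K : ℕ) (hK : 1 ≤ K) (R : ℕ → ℝ)
    (hratio : ∀ᶠ n : ℕ in Filter.atTop,
      a n / a (n + 1) =
        1 + 1 / (n : ℝ)
          + (1 / (n : ℝ)) * ∑ i ∈ Finset.Icc 1 K,
              1 / ∏ k ∈ Finset.Icc 1 i, Real.log^[k] (n : ℝ)
          + R n)
    (hR : Filter.Tendsto
      (fun n : ℕ => (n : ℝ) * (∏ k ∈ Finset.Icc 1 (K + 1), Real.log^[k] (n : ℝ)) * R n)
      Filter.atTop (nhds 0)) :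
    ¬ Summable a :=
  extended_test_remainder_divergence_general a ha K R hratio hR
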